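/- Let K_p, K_m, π, μ, σ, ρ ∈ ℝ, let S_p = (K_p, K_p−π, K_p+μ, K_p−π+μ), S_m = (K_m, K_m+σ, K_m−ρ, K_m+σ−ρ), and 𝟙 = (1,1,1,1). Suppose p = (p₁,p₂,p₃,p₄) ∈ ℝ⁴ and α, β, γ ∈ ℝ satisfy the componentwise zero-determinant condition (p₁−1, p₂−1, p₃, p₄) = α S_p + β S_m + γ 𝟙. Then for every q ∈ ℝ⁴, D(p, q, α S_p + β S_m + γ 𝟙) = 0; moreover, for any v ∈ ℝ⁴ with vᵀ A(p,q) = vᵀ, v·𝟙 = 1 and D(p,q,𝟙) ≠ 0, the expected payoffs satisfy the linear relation α (v·S_p) + β (v·S_m) + γ = 0. -/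

import Mathlib

/-!
Adding the first column of `A(p,q) - I` to the second and third gives the Press–Dyson
matrix, whose second column is `(p₁-1, p₂-1, p₃, p₄)`. The zero-determinant condition says that
`f = α S_p + β S_m + γ 𝟙` equals this column, so `D(p,q,f)` has two equal columns and
vanishes. On the other hand every stationary vector `v` lies in the left kernel of the
Press–Dyson matrix with last column `(v·𝟙) f - (v·f) 𝟙`; by linearity of `D` in its last
column this gives `(v·f) D(p,q,𝟙) = (v·𝟙) D(p,q,f) = 0`, hence `v·f = 0`.
-/

open Matrix

/-- The Markov (state-transition) matrix of the iterated game determined by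
the pool's strategy `p` and the miner's strategy `q`. -/
def Amat (p q : Fin 4 → ℝ) : Matrix (Fin 4) (Fin 4) ℝ :=
  Matrix.of fun i =>
    ![p i * q i, p i * (1 - q i), (1 - p i) * q i, (1 - p i) * (1 - q i)]

/-- The Press–Dyson determinant `D(p,q,f)`. -/
def Ddet (p q f : Fin 4 → ℝ) : ℝ :=
  (!![p 0 * q 0 - 1, p 0 - 1, q 0 - 1, f 0;
      p 1 * q 1,     p 1 - 1, q 1,     f 1;
      p 2 * q 2,     p 2,     q 2 - 1, f 2;
      p 3 * q 3,     p 3,     q 3,     f 3]).det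

def pressDysonMatrix (p q f : Fin 4 → ℝ) : Matrix (Fin 4) (Fin 4) ℝ :=
  !![p 0 * q 0 - 1, p 0 - 1, q 0 - 1, f 0;
     p 1 * q 1,     p 1 - 1, q 1,     f 1;
     p 2 * q 2,     p 2,     q 2 - 1, f 2;
     p 3 * q 3,     p 3,     q 3,     f 3]

theorem pressDysonMatrix_eq_updateCol (p q f : Fin 4 → ℝ) :
    pressDysonMatrix p q f = updateCol (pressDysonMatrix p q 0) 3 f := by
  ext i j
  fin_cases i <;> fin_cases j <;> rfl

theorem vecMul_pressDysonMatrix_of_stationary {p q v : Fin 4 → ℝ} (hv : v ᵥ* Amat p q = v)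
    (f : Fin 4 → ℝ) : v ᵥ* pressDysonMatrix p q f = ![0, 0, 0, v ⬝ᵥ f] := by
  have h0 := congrFun hv 0
  have h1 := congrFun hv 1
  have h2 := congrFun hv 2
  simp only [vecMul, dotProduct, Fin.sum_univ_four, Amat, of_apply, cons_val] at h0 h1 h2
  ext j
  fin_cases j <;>
    simp only [vecMul, dotProduct, pressDysonMatrix, Fin.sum_univ_four, of_apply, cons_val',
      cons_val_zero, cons_val_one, cons_val, cons_val_fin_one, Fin.isValue, Fin.zero_eta,
      Fin.mk_one, Fin.reduceFinMk]
  · linear_combination h0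
  · linear_combination h0 + h1
  · linear_combination h0 + h2

namespace Ddet

variable (p q : Fin 4 → ℝ)

theorem eq_det_pressDysonMatrix (f : Fin 4 → ℝ) : Ddet p q f = (pressDysonMatrix p q f).det :=
  rfl

theorem add (f g : Fin 4 → ℝ) : Ddet p q (f + g) = Ddet p q f + Ddet p q g := by
  simp only [eq_det_pressDysonMatrix]
  rw [pressDysonMatrix_eq_updateCol, det_updateCol_add, ← pressDysonMatrix_eq_updateCol,
    ← pressDysonMatrix_eq_updateCol]

theorem smul (c : ℝ) (f : Fin 4 → ℝ) : Ddet p q (c • f) = c * Ddet p q f := by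
  simp only [eq_det_pressDysonMatrix]
  rw [pressDysonMatrix_eq_updateCol, det_updateCol_smul, ← pressDysonMatrix_eq_updateCol]

theorem eq_zero_of_eq_second_column (f : Fin 4 → ℝ)
    (hf : f = ![p 0 - 1, p 1 - 1, p 2, p 3]) : Ddet p q f = 0 := by
  subst hf
  refine det_zero_of_column_eq (i := 1) (j := 3) (by decide) fun k => ?_
  fin_cases k <;> rfl

variable {p q}

theorem eq_zero_of_stationary {v f : Fin 4 → ℝ} (hv : v ᵥ* Amat p q = v) (hv0 : v ≠ 0)
    (hvf : v ⬝ᵥ f = 0) : Ddet p q f = 0 := by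
  rw [eq_det_pressDysonMatrix, ← exists_vecMul_eq_zero_iff]
  refine ⟨v, hv0, ?_⟩
  rw [vecMul_pressDysonMatrix_of_stationary hv, hvf]
  ext j
  fin_cases j <;> rfl

/-- The Press–Dyson formula `v·f = D(p,q,f) / D(p,q,𝟙)` for a normalized stationary `v`,
in a form free of division and normalization. -/
theorem dotProduct_mul_one_eq_of_stationary {v : Fin 4 → ℝ} (hv : v ᵥ* Amat p q = v)
    (f : Fin 4 → ℝ) :
    (v ⬝ᵥ f) * Ddet p q (fun _ => 1) = (v ⬝ᵥ fun _ => 1) * Ddet p q f := by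
  rcases eq_or_ne v 0 with rfl | hv0
  · simp
  have hzero := eq_zero_of_stationary (f := (v ⬝ᵥ fun _ => 1) • f + (-(v ⬝ᵥ f)) • fun _ => 1)
    hv hv0 (by simp only [dotProduct_add, dotProduct_smul, smul_eq_mul]; ring)
  rw [add, smul, smul] at hzero
  linarith

end Ddet

theorem zd_strategy_linear_payoff_relation_general
    (p : Fin 4 → ℝ) (α β γ : ℝ)
    (Sp Sm : Fin 4 → ℝ)
    (hZD : ![p 0 - 1, p 1 - 1, p 2, p 3] =
      α • Sp + β • Sm + γ • (fun _ => (1 : ℝ))) :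
    (∀ q : Fin 4 → ℝ,
        Ddet p q (α • Sp + β • Sm + γ • (fun _ => (1 : ℝ))) = 0) ∧
    (∀ q v : Fin 4 → ℝ,
        Matrix.vecMul v (Amat p q) = v →
        v ⬝ᵥ (fun _ => (1 : ℝ)) = 1 →
        Ddet p q (fun _ => (1 : ℝ)) ≠ 0 →
        α * (v ⬝ᵥ Sp) + β * (v ⬝ᵥ Sm) + γ = 0) := by
  have hD : ∀ q, Ddet p q (α • Sp + β • Sm + γ • fun _ => 1) = 0 := fun q =>
    Ddet.eq_zero_of_eq_second_column p q _ hZD.symm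
  refine ⟨hD, fun q v hv hone hD1 => ?_⟩
  have hpd := Ddet.dotProduct_mul_one_eq_of_stationary hv (α • Sp + β • Sm + γ • fun _ => 1)
  rw [hone, one_mul, hD q] at hpd
  have hvf := (mul_eq_zero.mp hpd).resolve_right hD1
  simpa only [dotProduct_add, dotProduct_smul, smul_eq_mul, hone, mul_one] using hvf

/-- if the pool's strategy satisfies the zero-determinant
condition `(p₁−1, p₂−1, p₃, p₄) = α S_p + β S_m + γ 𝟙`, then
`D(p,q, α S_p + β S_m + γ 𝟙) = 0` for every `q`; moreover, for any normalized
stationary vector `v` of `A(p,q)` with `D(p,q,𝟙) ≠ 0`, the expected payoffs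
satisfy `α S_p + β S_m + γ = 0`. -/
theorem zd_strategy_linear_payoff_relation
    (Kp Km π μ σ ρ : ℝ) (p : Fin 4 → ℝ) (α β γ : ℝ)
    (Sp Sm : Fin 4 → ℝ)
    (hSp : Sp = ![Kp, Kp - π, Kp + μ, Kp - π + μ])
    (hSm : Sm = ![Km, Km + σ, Km - ρ, Km + σ - ρ])
    (hZD : ![p 0 - 1, p 1 - 1, p 2, p 3] =
      α • Sp + β • Sm + γ • (fun _ => (1 : ℝ))) :
    (∀ q : Fin 4 → ℝ,
        Ddet p q (α • Sp + β • Sm + γ • (fun _ => (1 : ℝ))) = 0) ∧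
    (∀ q v : Fin 4 → ℝ,
        Matrix.vecMul v (Amat p q) = v →
        v ⬝ᵥ (fun _ => (1 : ℝ)) = 1 →
        Ddet p q (fun _ => (1 : ℝ)) ≠ 0 →
        α * (v ⬝ᵥ Sp) + β * (v ⬝ᵥ Sm) + γ = 0) :=
  zd_strategy_linear_payoff_relation_general p α β γ Sp Sm hZD
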